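/- arXiv:2104.14312 — 2 statements merged into one kernel-verified Lean document; each statement's English description precedes it below -/
import Mathlib

section
/- Let Y be a metric space and X a separable metric space. Let y ↦ K_y be a map from Y into the family of nonempty compact subsets of X. Suppose that for every sequence y_n → y in Y and every choice of points x_n ∈ K_{y_n}, the sequence (x_n) has a limit point belonging to K_y (i.e., a subsequence converging to a point of K_y). Then the map y ↦ K_y is Borel measurable from Y into the space of nonempty compact subsets of X endowed with the Hausdorff metric. -/
/-!
For a fixed compact set `A`, the Hausdorff distance `d_H(K y, A)` is the maximum of
`y ↦ sup_{x ∈ K y} infEDist x A`, which the subsequence hypothesis makes upper semicontinuous,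
and `y ↦ sup_{a ∈ A} infEDist a (K y)`, a supremum of functions it makes lower semicontinuous.
Both are therefore Borel, and in the separable space of nonempty compacts every open set is a
countable union of Hausdorff balls, so measurability of all `y ↦ d_H(K y, A)` gives that of `K`.
-/

open TopologicalSpace Filter Metric Set Topology

/-- The sequential form of upper hemicontinuity with compact values: along `y n → ylim`,
every selection `x n ∈ K (y n)` has a subsequence converging to a point of `K ylim`. -/
def SeqUpperHemicontinuous {Y X : Type*} [TopologicalSpace Y] [TopologicalSpace X]
    (K : Y → Set X) : Prop :=
  ∀ (y : ℕ → Y) (ylim : Y), Tendsto y atTop (𝓝 ylim) → ∀ x : ℕ → X, (∀ n, x n ∈ K (y n)) →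
    ∃ z ∈ K ylim, ∃ φ : ℕ → ℕ, StrictMono φ ∧ Tendsto (x ∘ φ) atTop (𝓝 z)

theorem measurable_of_forall_measurable_edist {α Z : Type*} [MeasurableSpace α]
    [PseudoEMetricSpace Z] [SecondCountableTopology Z] [MeasurableSpace Z] [BorelSpace Z]
    {f : α → Z} (hf : ∀ z, Measurable fun a => edist (f a) z) : Measurable f := by
  refine measurable_of_isOpen fun U hU => ?_
  set balls := {B | ∃ z r, B = eball z r ∧ B ⊆ U}
  obtain ⟨T, hTc, hTballs, hTU⟩ := isOpen_sUnion_countable balls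
    (by rintro _ ⟨z, r, rfl, -⟩; exact isOpen_eball)
  have hU_eq : U = ⋃₀ balls := by
    refine Subset.antisymm (fun z hz => ?_) (sUnion_subset fun _ ⟨_, _, _, hBU⟩ => hBU)
    obtain ⟨ε, hε, hεU⟩ := EMetric.isOpen_iff.1 hU z hz
    exact ⟨eball z ε, ⟨z, ε, rfl, hεU⟩, mem_eball_self hε⟩
  rw [hU_eq, ← hTU, preimage_sUnion]
  refine .biUnion hTc fun B hB => ?_
  obtain ⟨z, r, rfl, -⟩ := hTballs hB
  exact hf z measurableSet_Iio

namespace SeqUpperHemicontinuous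

variable {Y X β : Type*} [TopologicalSpace Y] [SequentialSpace Y]
  [CompleteLinearOrder β] [TopologicalSpace β] [OrderTopology β]

theorem upperSemicontinuous_biSup [TopologicalSpace X] {K : Y → NonemptyCompacts X}
    (hK : SeqUpperHemicontinuous fun y => (K y : Set X)) {g : X → β} (hg : Continuous g) :
    UpperSemicontinuous fun y => ⨆ x ∈ (K y : Set X), g x := by
  refine upperSemicontinuous_iff_isClosed_preimage.2 fun c =>
    IsSeqClosed.isClosed fun u y hu huy => ?_
  have hmax (n : ℕ) : ∃ x ∈ (K (u n) : Set X), IsMaxOn g (K (u n)) x :=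
    (K (u n)).isCompact.exists_isMaxOn (K (u n)).nonempty hg.continuousOn
  choose x hxK hxmax using hmax
  obtain ⟨z, hz, φ, -, hxz⟩ := hK u y huy x hxK
  have hcz : c ≤ g z := ge_of_tendsto ((hg.tendsto z).comp hxz) (.of_forall fun n =>
    (hu (φ n)).trans (iSup₂_le fun w hw => isMaxOn_iff.1 (hxmax (φ n)) w hw))
  exact hcz.trans (le_biSup g hz)

theorem lowerSemicontinuous_biInf [TopologicalSpace X] {K : Y → NonemptyCompacts X}
    (hK : SeqUpperHemicontinuous fun y => (K y : Set X)) {g : X → β} (hg : Continuous g) :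
    LowerSemicontinuous fun y => ⨅ x ∈ (K y : Set X), g x :=
  hK.upperSemicontinuous_biSup (β := βᵒᵈ) hg

theorem measurable_hausdorffEDist [PseudoEMetricSpace X] [MeasurableSpace Y]
    [OpensMeasurableSpace Y] {K : Y → NonemptyCompacts X}
    (hK : SeqUpperHemicontinuous fun y => (K y : Set X)) (A : Set X) :
    Measurable fun y => hausdorffEDist (K y : Set X) A := by
  simp only [hausdorffEDist_def]
  refine .sup (hK.upperSemicontinuous_biSup continuous_infEDist).measurable
    (lowerSemicontinuous_biSup fun a _ => ?_).measurable
  exact hK.lowerSemicontinuous_biInf (continuous_const.edist continuous_id)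

end SeqUpperHemicontinuous

/-- Stroock–Varadhan measurability lemma, Lemma 3.9 of the paper:
if `y ↦ K_y` maps a metric space `Y` into the nonempty compact subsets of a
separable metric space `X`, and whenever `y_n → y` and `x_n ∈ K_{y_n}` the
sequence `(x_n)` has a subsequence converging to a point of `K_y`, then
`y ↦ K_y` is Borel measurable for the Hausdorff metric. -/
theorem stroock_varadhan_measurability
    {Y X : Type*} [MetricSpace Y] [MetricSpace X] [SeparableSpace X]
    [MeasurableSpace Y] [BorelSpace Y]
    [MeasurableSpace (NonemptyCompacts X)] [BorelSpace (NonemptyCompacts X)]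
    (K : Y → NonemptyCompacts X)
    (hK : ∀ (y : ℕ → Y) (ylim : Y), Tendsto y atTop (nhds ylim) →
      ∀ x : ℕ → X, (∀ n, x n ∈ (K (y n) : Set X)) →
        ∃ z ∈ (K ylim : Set X), ∃ φ : ℕ → ℕ, StrictMono φ ∧
          Tendsto (x ∘ φ) atTop (nhds z)) :
    Measurable K := by
  have : SecondCountableTopology (NonemptyCompacts X) :=
    UniformSpace.secondCountable_of_separable _
  exact measurable_of_forall_measurable_edist fun A =>
    SeqUpperHemicontinuous.measurable_hausdorffEDist hK A
end

section
/- Let X be a separable metric space and let I : X → ℝ be a continuous function. Then, first, for every nonempty compact subset K ⊆ X the set argmin_K I := { x ∈ K : I(x) = inf_{y ∈ K} I(y) } is a nonempty compact subset of X; second, the map K ↦ argmin_K I from the space of nonempty compact subsets of X (with the Hausdorff metric) to itself is Borel measurable. -/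
open TopologicalSpace Metric Set

section ArgminAux

variable {X : Type*} [MetricSpace X] {I : X → ℝ}

/-- The argmin set of `I` over a nonempty compact `K`. -/
def argminSet (I : X → ℝ) (K : NonemptyCompacts X) : Set X :=
  {x ∈ (K : Set X) | I x = sInf (I '' (K : Set X))}

lemma argminSet_nonempty (hI : Continuous I) (K : NonemptyCompacts X) :
    (argminSet I K).Nonempty := by
  obtain ⟨x, hxK, hmin⟩ := K.isCompact.exists_isMinOn K.nonempty hI.continuousOn
  refine ⟨x, hxK, ?_⟩
  have : IsLeast (I '' (K : Set X)) (I x) := by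
    refine ⟨mem_image_of_mem _ hxK, ?_⟩
    rintro _ ⟨y, hy, rfl⟩
    exact hmin hy
  exact (this.csInf_eq).symm

lemma argminSet_isCompact (hI : Continuous I) (K : NonemptyCompacts X) :
    IsCompact (argminSet I K) := by
  have : argminSet I K = (K : Set X) ∩ I ⁻¹' {sInf (I '' (K : Set X))} := by
    ext x; simp [argminSet]
  rw [this]
  exact K.isCompact.inter_right (isClosed_singleton.preimage hI)

/-- The argmin map on nonempty compacts. -/
noncomputable def argminNC (hI : Continuous I) (K : NonemptyCompacts X) : NonemptyCompacts X :=
  ⟨⟨argminSet I K, argminSet_isCompact hI K⟩, argminSet_nonempty hI K⟩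

lemma argminNC_coe (hI : Continuous I) (K : NonemptyCompacts X) :
    (argminNC hI K : Set X) = argminSet I K := rfl

lemma argminNC_subset (hI : Continuous I) (K : NonemptyCompacts X) :
    (argminNC hI K : Set X) ⊆ (K : Set X) := fun _ hx => hx.1

lemma sInf_le_of_mem (hI : Continuous I) {K : NonemptyCompacts X} {x : X}
    (hx : x ∈ (K : Set X)) : sInf (I '' (K : Set X)) ≤ I x :=
  csInf_le (K.isCompact.image hI).bddBelow (mem_image_of_mem _ hx)

/-- Uniform continuity of `I` near a compact set. -/
lemma uniform_near (hI : Continuous I) {s : Set X} (hs : IsCompact s) {ε : ℝ} (hε : 0 < ε) :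
    ∃ δ > 0, ∀ z ∈ s, ∀ y, dist y z < δ → dist (I y) (I z) < ε := by
  have hc : ∀ z : X, ∃ r > 0, ∀ w, dist w z < r → dist (I w) (I z) < ε / 2 := fun z =>
    Metric.continuous_iff.1 hI z (ε / 2) (half_pos hε)
  choose r hr hball using hc
  rcases s.eq_empty_or_nonempty with hse | _
  · exact ⟨1, one_pos, by simp [hse]⟩
  obtain ⟨t, hts, hcover⟩ := hs.elim_nhds_subcover (fun z => ball z (r z / 2))
    (fun z _ => ball_mem_nhds z (half_pos (hr z)))
  rcases t.eq_empty_or_nonempty with rfl | htne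
  · refine ⟨1, one_pos, fun z hz => ?_⟩
    have := hcover hz; simp at this
  refine ⟨t.inf' htne (fun z => r z / 2), ?_, ?_⟩
  · exact (Finset.lt_inf'_iff _).2 fun z _ => half_pos (hr z)
  · intro z hz y hy
    obtain ⟨z₀, hz₀t, hz₀⟩ := Set.mem_iUnion₂.1 (hcover hz)
    have hrz₀ : dist z z₀ < r z₀ / 2 := mem_ball.1 hz₀
    have hδ : t.inf' htne (fun z => r z / 2) ≤ r z₀ / 2 := Finset.inf'_le _ hz₀t
    have h1 : dist y z₀ < r z₀ := by
      have := dist_triangle y z z₀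
      linarith [lt_of_lt_of_le hy hδ]
    have h2 := hball z₀ y h1
    have h3 := hball z₀ z (by linarith [hr z₀])
    calc dist (I y) (I z) ≤ dist (I y) (I z₀) + dist (I z) (I z₀) := dist_triangle_right _ _ _
      _ < ε := by linarith

lemma hausdorffEdist_ne_top (K K' : NonemptyCompacts X) :
    EMetric.hausdorffEdist (K : Set X) (K' : Set X) ≠ ⊤ :=
  Metric.hausdorffEdist_ne_top_of_nonempty_of_bounded K.nonempty K'.nonempty
    K.isCompact.isBounded K'.isCompact.isBounded

/-- Key upper-semicontinuity property of the argmin map. -/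
lemma argmin_usc (hI : Continuous I) (K : NonemptyCompacts X) {ε : ℝ} (hε : 0 < ε) :
    ∃ η > 0, ∀ K' : NonemptyCompacts X, dist K' K < η →
      (argminNC hI K' : Set X) ⊆ thickening ε (argminNC hI K : Set X) := by
  set A : Set X := (argminNC hI K : Set X) with hA
  set m : ℝ := sInf (I '' (K : Set X)) with hm
  -- Step 1: find δ > 0 such that near-minimizers are in thickening (ε/2) A
  have step1 : ∃ δ > 0, ∀ x ∈ (K : Set X), I x ≤ m + δ → x ∈ thickening (ε / 2) A := by
    set C : Set X := (K : Set X) \ thickening (ε / 2) A with hC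
    have hCc : IsCompact C := K.isCompact.diff isOpen_thickening
    rcases C.eq_empty_or_nonempty with hCe | hCne
    · refine ⟨1, one_pos, fun x hx _ => ?_⟩
      by_contra hxn
      have : x ∈ C := Set.mem_diff_of_mem hx hxn
      rw [hCe] at this
      exact this
    · obtain ⟨w, hwC, hwmin⟩ := hCc.exists_isMinOn hCne hI.continuousOn
      have hwK : w ∈ (K : Set X) := hwC.1
      have hwm : m < I w := by
        rcases lt_or_eq_of_le (sInf_le_of_mem hI hwK) with h | h
        · exact h
        · exfalso
          have hwA : w ∈ A := ⟨hwK, h.symm⟩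
          exact hwC.2 (self_subset_thickening (half_pos hε) _ hwA)
      refine ⟨(I w - m) / 2, by linarith, fun x hx hxle => ?_⟩
      by_contra hxn
      have hxC : x ∈ C := Set.mem_diff_of_mem hx hxn
      have := hwmin hxC
      simp only [Set.mem_setOf_eq] at this
      linarith
  obtain ⟨δ, hδ, hδprop⟩ := step1
  -- Step 2: uniform continuity parameter
  obtain ⟨δ', hδ', hδ'prop⟩ := uniform_near hI K.isCompact (half_pos hδ)
  refine ⟨min δ' (ε / 2), lt_min hδ' (half_pos hε), fun K' hK' => ?_⟩
  have hdH : hausdorffDist (K' : Set X) (K : Set X) < min δ' (ε / 2) := by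
    rwa [NonemptyCompacts.dist_eq] at hK'
  have fin := hausdorffEdist_ne_top K' K
  -- bound inf over K' : m K' < m + δ/2
  obtain ⟨xstar, hxs⟩ := argminSet_nonempty hI K
  obtain ⟨w, hwK', hw⟩ := exists_dist_lt_of_hausdorffDist_lt' hxs.1 hdH fin
  have hIw : dist (I w) (I xstar) < δ / 2 :=
    hδ'prop xstar hxs.1 w (lt_of_lt_of_le hw (min_le_left _ _))
  have hm' : sInf (I '' (K' : Set X)) < m + δ / 2 := by
    have h1 : sInf (I '' (K' : Set X)) ≤ I w := sInf_le_of_mem hI hwK'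
    have h2 : |I w - I xstar| < δ / 2 := by rwa [Real.dist_eq] at hIw
    have := hxs.2
    rw [abs_lt] at h2
    linarith
  intro y hy
  obtain ⟨hyK', hyval⟩ := hy
  obtain ⟨z, hzK, hz⟩ := exists_dist_lt_of_hausdorffDist_lt hyK' hdH fin
  have hIz : dist (I y) (I z) < δ / 2 :=
    hδ'prop z hzK y (lt_of_lt_of_le hz (min_le_left _ _))
  have hzval : I z ≤ m + δ := by
    have h2 : |I y - I z| < δ / 2 := by rwa [Real.dist_eq] at hIz
    rw [abs_lt] at h2
    linarith [hyval ▸ hm']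
  have hzthick : z ∈ thickening (ε / 2) A := hδprop z hzK hzval
  obtain ⟨a, haA, hza⟩ := mem_thickening_iff.1 hzthick
  refine mem_thickening_iff.2 ⟨a, haA, ?_⟩
  calc dist y a ≤ dist y z + dist z a := dist_triangle _ _ _
    _ < ε := by linarith [lt_of_lt_of_le hz (min_le_right δ' (ε / 2))]

/-- For open `U`, the set of `K` with `argmin K ⊆ U` is open. -/
lemma isOpen_argmin_subset (hI : Continuous I) {U : Set X} (hU : IsOpen U) :
    IsOpen {K : NonemptyCompacts X | (argminNC hI K : Set X) ⊆ U} := by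
  rw [Metric.isOpen_iff]
  intro K hK
  obtain ⟨ε, hε, hthick⟩ :=
    (argminSet_isCompact hI K).exists_thickening_subset_open hU hK
  obtain ⟨η, hη, hηprop⟩ := argmin_usc hI K hε
  exact ⟨η, hη, fun K' hK' => (hηprop K' (mem_ball.1 hK')).trans hthick⟩

/-- Lower semicontinuity of `K ↦ infDist y (argmin K)`. -/
lemma lsc_infDist_argmin (hI : Continuous I) (y : X) :
    LowerSemicontinuous fun K : NonemptyCompacts X =>
      infDist y (argminNC hI K : Set X) := by
  intro K t ht
  set g := fun K : NonemptyCompacts X => infDist y (argminNC hI K : Set X) with hg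
  have hε : 0 < (g K - t) / 2 := by simp only [hg] at ht ⊢; linarith
  obtain ⟨η, hη, hηprop⟩ := argmin_usc hI K hε
  filter_upwards [Metric.ball_mem_nhds K hη] with K' hK'
  have hsub := hηprop K' (mem_ball.1 hK')
  have : g K - (g K - t) / 2 ≤ g K' := by
    by_contra h
    push_neg at h
    obtain ⟨z, hz, hdz⟩ := (infDist_lt_iff (argminSet_nonempty hI K')).1 h
    obtain ⟨a, haA, hza⟩ := mem_thickening_iff.1 (hsub hz)
    have h1 : infDist y (argminNC hI K : Set X) ≤ dist y a := infDist_le_dist_of_mem haA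
    have h2 : dist y a ≤ dist y z + dist z a := dist_triangle _ _ _
    simp only [hg] at h1 hdz ⊢
    linarith
  simp only [hg] at this ⊢
  linarith

end ArgminAux

section ArgminMeasurable

set_option linter.unusedSectionVars false

variable {X : Type*} [MetricSpace X] {I : X → ℝ}
  [MeasurableSpace (NonemptyCompacts X)] [BorelSpace (NonemptyCompacts X)]

lemma hd_le_iff (hI : Continuous I) (K L : NonemptyCompacts X) {c : ℝ} :
    hausdorffDist (argminNC hI K : Set X) (L : Set X) ≤ c ↔
      (∀ x ∈ (argminNC hI K : Set X), infDist x (L : Set X) ≤ c) ∧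
      (∀ l ∈ (L : Set X), infDist l (argminNC hI K : Set X) ≤ c) := by
  have fin := hausdorffEdist_ne_top (argminNC hI K) L
  have fin' := hausdorffEdist_ne_top L (argminNC hI K)
  constructor
  · intro h
    refine ⟨fun x hx => le_trans (infDist_le_hausdorffDist_of_mem hx fin) h,
      fun l hl => le_trans (infDist_le_hausdorffDist_of_mem hl fin') ?_⟩
    rwa [hausdorffDist_comm]
  · rintro ⟨h1, h2⟩
    rcases le_or_gt 0 c with hc | hc
    · exact hausdorffDist_le_of_infDist hc h1 h2
    · exfalso
      obtain ⟨x, hx⟩ := argminSet_nonempty hI K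
      exact absurd (le_trans infDist_nonneg (h1 x hx)) (not_le.2 hc)

lemma measurable_P (hI : Continuous I) (L : NonemptyCompacts X) (c : ℝ) :
    MeasurableSet {K : NonemptyCompacts X |
      ∀ x ∈ (argminNC hI K : Set X), infDist x (L : Set X) ≤ c} := by
  set Cc : Set X := {x | infDist x (L : Set X) ≤ c} with hCc
  have hCcCl : IsClosed Cc := isClosed_le (continuous_infDist_pt _) continuous_const
  have hrw : {K : NonemptyCompacts X |
      ∀ x ∈ (argminNC hI K : Set X), infDist x (L : Set X) ≤ c} =
      {K : NonemptyCompacts X | (argminNC hI K : Set X) ⊆ Cc} := rfl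
  rw [hrw]
  rcases Cc.eq_empty_or_nonempty with hCce | hCcne
  · have : {K : NonemptyCompacts X | (argminNC hI K : Set X) ⊆ Cc} = ∅ := by
      ext K
      simp only [Set.mem_setOf_eq, Set.mem_empty_iff_false, iff_false]
      intro h
      obtain ⟨x, hx⟩ := argminSet_nonempty hI K
      have := h hx
      rw [hCce] at this
      exact this
    rw [this]; exact MeasurableSet.empty
  · have heq : {K : NonemptyCompacts X | (argminNC hI K : Set X) ⊆ Cc} =
        ⋂ m : ℕ, {K : NonemptyCompacts X |
          (argminNC hI K : Set X) ⊆ thickening (1 / (m + 1)) Cc} := by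
      ext K
      simp only [Set.mem_setOf_eq, Set.mem_iInter]
      constructor
      · intro h m
        exact h.trans (self_subset_thickening (by positivity) _)
      · intro h x hx
        have hle : ∀ m : ℕ, infDist x Cc < 1 / (m + 1) := fun m =>
          (mem_thickening_iff_infDist_lt hCcne).1 (h m hx)
        have h0 : infDist x Cc ≤ 0 := by
          by_contra hpos
          push_neg at hpos
          obtain ⟨n, hn⟩ := exists_nat_one_div_lt hpos
          exact absurd (hle n) (not_lt.2 (by exact_mod_cast hn.le))
        have : infDist x Cc = 0 := le_antisymm h0 infDist_nonneg
        exact (hCcCl.mem_iff_infDist_zero hCcne).2 this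
    rw [heq]
    exact MeasurableSet.iInter fun m =>
      (isOpen_argmin_subset hI isOpen_thickening).measurableSet

lemma measurable_Q [SeparableSpace X] (hI : Continuous I) (L : NonemptyCompacts X) (c : ℝ) :
    MeasurableSet {K : NonemptyCompacts X |
      ∀ l ∈ (L : Set X), infDist l (argminNC hI K : Set X) ≤ c} := by
  haveI : SecondCountableTopology X := UniformSpace.secondCountable_of_separable X
  obtain ⟨D0, hD0c, hD0d⟩ := TopologicalSpace.exists_countable_dense (↥(L : Set X))
  set D : Set X := Subtype.val '' D0 with hD
  have hDc : D.Countable := hD0c.image _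
  have hDL : D ⊆ (L : Set X) := by rintro _ ⟨⟨d, hd⟩, _, rfl⟩; exact hd
  have heq : {K : NonemptyCompacts X |
      ∀ l ∈ (L : Set X), infDist l (argminNC hI K : Set X) ≤ c} =
      ⋂ d ∈ D, {K : NonemptyCompacts X | infDist d (argminNC hI K : Set X) ≤ c} := by
    ext K
    simp only [Set.mem_setOf_eq, Set.mem_iInter]
    constructor
    · intro h d hd
      exact h d (hDL hd)
    · intro h l hl
      refine le_of_forall_pos_le_add fun ε hε => ?_
      obtain ⟨d0, hd0ball, hd0D⟩ := Metric.dense_iff.1 hD0d ⟨l, hl⟩ ε hε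
      have hdd : dist l (d0 : X) < ε := by
        have := mem_ball.1 hd0ball
        rwa [Subtype.dist_eq, dist_comm] at this
      have h1 : infDist l (argminNC hI K : Set X) ≤
          infDist (d0 : X) (argminNC hI K : Set X) + dist l (d0 : X) :=
        infDist_le_infDist_add_dist
      have h2 : infDist (d0 : X) (argminNC hI K : Set X) ≤ c :=
        h _ ⟨d0, hd0D, rfl⟩
      linarith
  rw [heq]
  refine MeasurableSet.biInter hDc fun d _ => ?_
  have : {K : NonemptyCompacts X | infDist d (argminNC hI K : Set X) ≤ c} =
      (fun K : NonemptyCompacts X => infDist d (argminNC hI K : Set X)) ⁻¹' Set.Iic c := rfl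
  rw [this]
  exact (lsc_infDist_argmin hI d).measurable measurableSet_Iic

lemma measurable_ball_preimage [SeparableSpace X] (hI : Continuous I)
    (L : NonemptyCompacts X) (r : ℝ) :
    MeasurableSet ((argminNC hI) ⁻¹' Metric.ball L r) := by
  have heq : (argminNC hI) ⁻¹' Metric.ball L r =
      ⋃ n : ℕ, ({K : NonemptyCompacts X |
          ∀ x ∈ (argminNC hI K : Set X), infDist x (L : Set X) ≤ r - 1 / (n + 1)} ∩
        {K : NonemptyCompacts X |
          ∀ l ∈ (L : Set X), infDist l (argminNC hI K : Set X) ≤ r - 1 / (n + 1)}) := by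
    ext K
    simp only [Set.mem_preimage, mem_ball, Set.mem_iUnion, Set.mem_inter_iff,
      Set.mem_setOf_eq]
    rw [NonemptyCompacts.dist_eq]
    constructor
    · intro h
      obtain ⟨n, hn⟩ := exists_nat_one_div_lt (sub_pos.2 h)
      have : hausdorffDist (argminNC hI K : Set X) (L : Set X) ≤ r - 1 / (n + 1) := by
        have : (1 : ℝ) / (n + 1) < r - hausdorffDist (argminNC hI K : Set X) (L : Set X) := by
          exact_mod_cast hn
        linarith
      exact ⟨n, (hd_le_iff hI K L).1 this⟩
    · rintro ⟨n, h1, h2⟩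
      have hle := (hd_le_iff hI K L).2 ⟨h1, h2⟩
      have hpos : (0 : ℝ) < 1 / ((n : ℝ) + 1) := by positivity
      linarith
  rw [heq]
  exact MeasurableSet.iUnion fun n =>
    (measurable_P hI L _).inter (measurable_Q hI L _)

lemma measurable_argminNC [SeparableSpace X] (hI : Continuous I) :
    Measurable (argminNC hI : NonemptyCompacts X → NonemptyCompacts X) := by
  haveI : SecondCountableTopology X := UniformSpace.secondCountable_of_separable X
  apply measurable_of_isOpen
  intro V hV
  -- write V as a countable union of balls
  obtain ⟨S, hSc, hSd⟩ := TopologicalSpace.exists_countable_dense (NonemptyCompacts X)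
  set T : Set (NonemptyCompacts X × ℚ) :=
    {p | p.1 ∈ S ∧ Metric.ball p.1 (p.2 : ℝ) ⊆ V} with hT
  have hTc : T.Countable := by
    have : T ⊆ S ×ˢ (Set.univ : Set ℚ) := fun p hp => ⟨hp.1, trivial⟩
    exact (hSc.prod (Set.countable_univ)).mono this
  have hVeq : V = ⋃ p ∈ T, Metric.ball p.1 (p.2 : ℝ) := by
    ext K
    simp only [Set.mem_iUnion]
    constructor
    · intro hK
      obtain ⟨ε, hε, hball⟩ := Metric.isOpen_iff.1 hV K hK
      obtain ⟨d, hdball, hdS⟩ := Metric.dense_iff.1 hSd K (ε / 4) (by linarith)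
      obtain ⟨q, hq1, hq2⟩ := exists_rat_btwn (show ε / 4 < ε / 2 by linarith)
      refine ⟨(d, q), ⟨hdS, ?_⟩, ?_⟩
      · intro y hy
        apply hball
        have h1 : dist y K ≤ dist y d + dist d K := dist_triangle _ _ _
        have h2 : dist d K < ε / 4 := mem_ball.1 hdball
        have h3 : dist y d < (q : ℝ) := mem_ball.1 hy
        exact mem_ball.2 (by linarith)
      · have h2 : dist d K < ε / 4 := mem_ball.1 hdball
        exact mem_ball.2 (by rw [dist_comm]; linarith)
    · rintro ⟨p, hpT, hKp⟩
      exact hpT.2 hKp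
  rw [hVeq, Set.preimage_iUnion₂]
  exact MeasurableSet.biUnion hTc fun p _ => measurable_ball_preimage hI p.1 (p.2 : ℝ)

end ArgminMeasurable

/-- for a continuous `I : X → ℝ` on a separable metric space `X`,
the argmin set over any nonempty compact `K` is a nonempty compact set, and the
resulting map `K ↦ argmin_K I` on nonempty compact subsets (with the Hausdorff
metric) is Borel measurable. -/
theorem argmin_map_measurable
    {X : Type*} [MetricSpace X] [SeparableSpace X]
    [MeasurableSpace (NonemptyCompacts X)] [BorelSpace (NonemptyCompacts X)]
    (I : X → ℝ) (hI : Continuous I) :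
    (∀ K : NonemptyCompacts X,
        ({x ∈ (K : Set X) | I x = sInf (I '' (K : Set X))} : Set X).Nonempty ∧
        IsCompact {x ∈ (K : Set X) | I x = sInf (I '' (K : Set X))}) ∧
      ∃ F : NonemptyCompacts X → NonemptyCompacts X,
        (∀ K : NonemptyCompacts X,
          (F K : Set X) = {x ∈ (K : Set X) | I x = sInf (I '' (K : Set X))}) ∧
        Measurable F := by
  refine ⟨fun K => ⟨argminSet_nonempty hI K, argminSet_isCompact hI K⟩,
    argminNC hI, fun K => rfl, measurable_argminNC hI⟩
end
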